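/- If N is a tree-child network on X ⊆ [n], j ∈ X, i ≠ j, and σ_N(i) = N (i.e., i ∉ X), then in N' = ^{(i,j)}N the states satisfy σ_{N'}(i) = σ_{N'}(j) = T and σ_{N'}(l) = σ_N(l) for all l ∈ [n] \ {i,j}. -/
import Mathlib


/-- A directed graph with node set `V ⊆ ℕ` and arc set `A`.  Leaves are
identified with their taxon labels (natural numbers). -/
structure Net where
  V : Finset ℕ
  A : Finset (ℕ × ℕ)

namespace Net

def indeg (N : Net) (v : ℕ) : ℕ := (N.A.filter (fun a => a.2 = v)).card
def outdeg (N : Net) (v : ℕ) : ℕ := (N.A.filter (fun a => a.1 = v)).card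

def isLeaf (N : Net) (v : ℕ) : Prop := v ∈ N.V ∧ N.indeg v = 1 ∧ N.outdeg v = 0
def isRoot (N : Net) (v : ℕ) : Prop := v ∈ N.V ∧ N.indeg v = 0 ∧ N.outdeg v = 1
def isTreeNode (N : Net) (v : ℕ) : Prop := v ∈ N.V ∧ N.indeg v = 1 ∧ N.outdeg v = 2
def isRetic (N : Net) (v : ℕ) : Prop := v ∈ N.V ∧ N.indeg v = 2 ∧ N.outdeg v = 1

/-- The set of leaves (= taxa) of a network. -/
def leaves (N : Net) : Finset ℕ := N.V.filter (fun v => N.indeg v = 1 ∧ N.outdeg v = 0)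

/-- Number of reticulation nodes. -/
def numRetic (N : Net) : ℕ := (N.V.filter (fun v => N.indeg v = 2 ∧ N.outdeg v = 1)).card

/-- `N` is a rooted binary phylogenetic network: arcs join nodes, it is acyclic,
has a unique root, and every node is a root, leaf, tree node or reticulation. -/
def isPhylo (N : Net) : Prop :=
  (∀ a ∈ N.A, a.1 ∈ N.V ∧ a.2 ∈ N.V) ∧
  (∀ v, ¬ Relation.TransGen (fun u w => (u, w) ∈ N.A) v v) ∧
  (∃! r, N.isRoot r) ∧
  (∀ v ∈ N.V, N.isRoot v ∨ N.isLeaf v ∨ N.isTreeNode v ∨ N.isRetic v)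

/-- `(i,j)` is a cherry: `i ≠ j` are leaves with a common parent. -/
def isCherry (N : Net) (i j : ℕ) : Prop :=
  i ≠ j ∧ N.isLeaf i ∧ N.isLeaf j ∧ ∃ p, (p, i) ∈ N.A ∧ (p, j) ∈ N.A

/-- `(i,j)` is a reticulated cherry: the parent of `i` is a reticulation,
the parent of `j` is a tree node and a parent of the parent of `i`. -/
def isRetCherry (N : Net) (i j : ℕ) : Prop :=
  i ≠ j ∧ N.isLeaf i ∧ N.isLeaf j ∧
    ∃ pi pj, (pi, i) ∈ N.A ∧ (pj, j) ∈ N.A ∧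
      N.isRetic pi ∧ N.isTreeNode pj ∧ (pj, pi) ∈ N.A

/-- `(i,j)` is a reducible pair. -/
def Reducible (N : Net) (s : ℕ × ℕ) : Prop := N.isCherry s.1 s.2 ∨ N.isRetCherry s.1 s.2

end Net

/-- The reduction of a cherry `(i,j)`: delete leaf `i` and simplify the
(now elementary) common parent `p`, whose parent is `g`. -/
def CherryReduce (N : Net) (i j : ℕ) (N' : Net) : Prop :=
  ∃ p g, (p, i) ∈ N.A ∧ (p, j) ∈ N.A ∧ (g, p) ∈ N.A ∧
    N'.V = (N.V.erase i).erase p ∧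
    N'.A = (N.A \ {(p, i), (p, j), (g, p)}) ∪ {(g, j)}

/-- The reduction of a reticulated cherry `(i,j)`: delete the arc from the parent
`pj` of `j` to the parent `pi` of `i`, and simplify the two elementary nodes. -/
def RetCherryReduce (N : Net) (i j : ℕ) (N' : Net) : Prop :=
  ∃ pi pj q g, (pi, i) ∈ N.A ∧ (pj, j) ∈ N.A ∧ (pj, pi) ∈ N.A ∧
    (q, pi) ∈ N.A ∧ q ≠ pj ∧ (g, pj) ∈ N.A ∧
    N'.V = (N.V.erase pi).erase pj ∧
    N'.A = (N.A \ {(pj, pi), (q, pi), (pi, i), (g, pj), (pj, j)}) ∪ {(q, i), (g, j)}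

/-- `N'` is the reduction `N^{(i,j)}` of the reducible pair `s = (i,j)` in `N`. -/
def Reduces (N : Net) (s : ℕ × ℕ) (N' : Net) : Prop :=
  (N.isCherry s.1 s.2 ∧ CherryReduce N s.1 s.2 N') ∨
  (N.isRetCherry s.1 s.2 ∧ RetCherryReduce N s.1 s.2 N')

/-- `N'` is the result of reducing in `N` the pairs of the sequence `S`, from left to right. -/
inductive ReducesSeq : Net → List (ℕ × ℕ) → Net → Prop
  | nil (N : Net) : ReducesSeq N [] N
  | cons {N M N' : Net} {s : ℕ × ℕ} {S : List (ℕ × ℕ)} :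
      Reduces N s M → ReducesSeq M S N' → ReducesSeq N (s :: S) N'

/-- `N` is the trivial network `I l` (a root and the leaf `l`). -/
def isTrivial (N : Net) (l : ℕ) : Prop :=
  ∃ r, r ≠ l ∧ N.V = {r, l} ∧ N.A = {(r, l)}

/-- `S` is a complete reducible sequence for `N`. -/
def CompleteRS (N : Net) (S : List (ℕ × ℕ)) : Prop :=
  ∃ N' l, ReducesSeq N S N' ∧ isTrivial N' l

/-- `N` is an orchard network. -/
def Net.isOrchard (N : Net) : Prop := N.isPhylo ∧ ∃ S, CompleteRS N S

/-- Isomorphism of networks: an arc-preserving and arc-reflecting bijection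
of the nodes which is the identity on the leaves. -/
def NetIso (N N' : Net) : Prop :=
  ∃ φ : ℕ → ℕ, Set.BijOn φ ↑N.V ↑N'.V ∧
    (∀ u ∈ N.V, ∀ v ∈ N.V, ((u, v) ∈ N.A ↔ (φ u, φ v) ∈ N'.A)) ∧
    ∀ l ∈ N.leaves, φ l = l

/-- Augmentation of `(i,j)` when `i` is a new taxon: create a new leaf `i`,
subdivide the arc `(q,j)` into `j` with a new node `p`, and add the arc `(p,i)`. -/
def CherryAug (N : Net) (i j : ℕ) (N' : Net) : Prop :=
  ∃ q p, (q, j) ∈ N.A ∧ i ∉ N.V ∧ p ∉ N.V ∧ p ≠ i ∧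
    N'.V = insert i (insert p N.V) ∧
    N'.A = (N.A.erase (q, j)) ∪ {(q, p), (p, j), (p, i)}

/-- Augmentation of `(i,j)` when `i` is already a leaf: subdivide the arcs into
`i` and `j` with new nodes `pi`, `pj` and add the arc `(pj, pi)`. -/
def RetAug (N : Net) (i j : ℕ) (N' : Net) : Prop :=
  ∃ qi qj pi pj, (qi, i) ∈ N.A ∧ (qj, j) ∈ N.A ∧
    pi ∉ N.V ∧ pj ∉ N.V ∧ pi ≠ pj ∧
    N'.V = insert pi (insert pj N.V) ∧
    N'.A = ((N.A.erase (qi, i)).erase (qj, j)) ∪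
      {(qi, pi), (pi, i), (qj, pj), (pj, j), (pj, pi)}

/-- `N'` is the augmentation `^{(i,j)}N` of the pair `s = (i,j)` in `N`. -/
def Augments (N : Net) (s : ℕ × ℕ) (N' : Net) : Prop :=
  s.1 ≠ s.2 ∧ N.isLeaf s.2 ∧
    ((s.1 ∉ N.leaves ∧ CherryAug N s.1 s.2 N') ∨
     (s.1 ∈ N.leaves ∧ RetAug N s.1 s.2 N'))

/-- The total order on pairs: `(i,j) ≤ (i',j')` iff `i < i'` or (`i = i'` and `j ≤ j'`). -/
def pairLE (p q : ℕ × ℕ) : Prop := p.1 < q.1 ∨ (p.1 = q.1 ∧ p.2 ≤ q.2)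

/-- Strict version of `pairLE`. -/
def pairLT (p q : ℕ × ℕ) : Prop := p.1 < q.1 ∨ (p.1 = q.1 ∧ p.2 < q.2)

/-- Lexicographic order on sequences of pairs (of the same length). -/
def seqLE : List (ℕ × ℕ) → List (ℕ × ℕ) → Prop
  | [], [] => True
  | p :: S, q :: S' => pairLT p q ∨ (p = q ∧ seqLE S S')
  | _, _ => False

/-- `s` is the minimum reducible pair of `N`. -/
def isMRP (N : Net) (s : ℕ × ℕ) : Prop :=
  N.Reducible s ∧ ∀ t, N.Reducible t → pairLE s t

/-- `S` is the minimum complete reducible sequence of `N`. -/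
def isMCRS (N : Net) (S : List (ℕ × ℕ)) : Prop :=
  CompleteRS N S ∧ ∀ S', CompleteRS N S' → seqLE S S'

/-- `N` is (isomorphic to) the network `^S I` generated by applying the
augmentations of `S`, from right to left, to a trivial network. -/
inductive Generates : List (ℕ × ℕ) → Net → Prop
  | triv {N : Net} {l : ℕ} : isTrivial N l → Generates [] N
  | cons {s : ℕ × ℕ} {S : List (ℕ × ℕ)} {N N' : Net} :
      Generates S N → Augments N s N' → Generates (s :: S) N'

/-- `S` is a minimum augmentation sequence: `S = MCRS(^S I)`. -/
def isMinAugSeq (S : List (ℕ × ℕ)) : Prop :=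
  ∃ N, Generates S N ∧ isMCRS N S

/-- `N` is tree-child: every internal node has a child that is not a reticulation. -/
def Net.isTreeChild (N : Net) : Prop :=
  ∀ v ∈ N.V, ¬ N.isLeaf v → ∃ c, (v, c) ∈ N.A ∧ ¬ N.isRetic c

/-- The possible states of a taxon in a network. -/
inductive LState | sN | sP | sS | sT
deriving DecidableEq

open Classical in
/-- The state `σ_N(i)` of a taxon `i`: `sN` if `i` is not a leaf of `N`; otherwise
`sP` if its parent is a reticulation; otherwise `sS` if its sibling is a
reticulation; otherwise `sT`. -/
noncomputable def state (N : Net) (i : ℕ) : LState :=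
  if ¬ N.isLeaf i then .sN
  else if ∃ p, (p, i) ∈ N.A ∧ N.isRetic p then .sP
  else if ∃ p s, (p, i) ∈ N.A ∧ (p, s) ∈ N.A ∧ s ≠ i ∧ N.isRetic s then .sS
  else .sT
/-- State update when adding a cherry (`σ_N(i) = N`, i.e. `i` is not a leaf of
`N`): in `N' = ^{(i,j)}N` the states of `i` and `j` become `T` and all other
states are unchanged. -/
theorem state_update_cherryAug (N N' : Net) (i j : ℕ)
    (h : N.isPhylo) (htc : N.isTreeChild) (hij : i ≠ j) (hj : N.isLeaf j)
    (hi : state N i = LState.sN) (haug : Augments N (i, j) N') :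
    state N' i = LState.sT ∧ state N' j = LState.sT ∧
    ∀ l : ℕ, l ≠ i → l ≠ j → state N' l = state N l := by
  classical
  obtain ⟨hA, hacyc, -, -⟩ := h
  -- i is not a leaf of N
  have hnotleaf : ¬ N.isLeaf i := by
    intro hil
    rw [state] at hi
    simp only [hil, not_true] at hi
    split_ifs at hi <;> simp_all
  have hnl : i ∉ N.leaves := by
    intro hmem
    exact hnotleaf (by simpa [Net.leaves, Net.isLeaf, Finset.mem_filter, and_assoc] using hmem)
  obtain ⟨-, -, hcase⟩ := haug
  rcases hcase with ⟨-, haug⟩ | ⟨hmem, -⟩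
  swap
  · exact absurd hmem hnl
  obtain ⟨q, p, hqj, hiV, hpV, hpi, hV', hA'⟩ := haug
  have hqV : q ∈ N.V := (hA _ hqj).1
  have hjV : j ∈ N.V := hj.1
  have hqi : q ≠ i := fun h => hiV (h ▸ hqV)
  have hqp : q ≠ p := fun h => hpV (h ▸ hqV)
  have hqj' : q ≠ j := by
    intro h; exact hacyc j (Relation.TransGen.single (h ▸ hqj))
  have hpj : p ≠ j := fun h => hpV (h ▸ hjV)
  -- membership characterization of N'.A
  have hmem : ∀ a : ℕ × ℕ, a ∈ N'.A ↔
      (a ∈ N.A ∧ a ≠ (q, j)) ∨ a = (q, p) ∨ a = (p, j) ∨ a = (p, i) := by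
    intro a
    simp only [hA', Finset.mem_union, Finset.mem_erase, Finset.mem_insert,
      Finset.mem_singleton]
    tauto
  -- unique arc into j
  have huniqj : ∀ a ∈ N.A, a.2 = j → a = (q, j) := by
    intro a ha h2
    have hc : (N.A.filter (fun a => a.2 = j)).card = 1 := hj.2.1
    obtain ⟨b, hb⟩ := Finset.card_eq_one.mp hc
    have h1 : a ∈ N.A.filter (fun a => a.2 = j) := Finset.mem_filter.mpr ⟨ha, h2⟩
    have h2' : (q, j) ∈ N.A.filter (fun a => a.2 = j) := Finset.mem_filter.mpr ⟨hqj, rfl⟩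
    rw [hb, Finset.mem_singleton] at h1 h2'
    rw [h1, h2']
  -- no arc out of j
  have hnoj : ∀ a ∈ N.A, a.1 ≠ j := by
    intro a ha h1
    have hc : (N.A.filter (fun a => a.1 = j)).card = 0 := hj.2.2
    have h1 : a ∈ N.A.filter (fun a => a.1 = j) := Finset.mem_filter.mpr ⟨ha, h1⟩
    rw [Finset.card_eq_zero.mp hc] at h1
    exact absurd h1 (Finset.notMem_empty a)
  have hAi : ∀ a ∈ N.A, a.1 ≠ i ∧ a.2 ≠ i ∧ a.1 ≠ p ∧ a.2 ≠ p := by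
    intro a ha
    obtain ⟨h1, h2⟩ := hA a ha
    exact ⟨fun h => hiV (h ▸ h1), fun h => hiV (h ▸ h2),
      fun h => hpV (h ▸ h1), fun h => hpV (h ▸ h2)⟩
  -- degree computations
  have hin_i : N'.A.filter (fun a => a.2 = i) = {(p, i)} := by
    ext a
    simp only [Finset.mem_filter, Finset.mem_singleton, hmem]
    constructor
    · rintro ⟨(⟨ha, -⟩ | rfl | rfl | rfl), h2⟩
      · exact absurd h2 (hAi a ha).2.1
      · exact absurd h2 (by simpa using hpi)
      · exact absurd h2 (by simpa using Ne.symm hij)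
      · rfl
    · rintro rfl; exact ⟨by tauto, rfl⟩
  have hout_i : N'.A.filter (fun a => a.1 = i) = ∅ := by
    ext a
    simp only [Finset.mem_filter, Finset.notMem_empty, iff_false, not_and, hmem]
    rintro (⟨ha, -⟩ | rfl | rfl | rfl)
    · exact (hAi a ha).1
    · exact hqi
    · exact hpi
    · exact hpi
  have hin_j : N'.A.filter (fun a => a.2 = j) = {(p, j)} := by
    ext a
    simp only [Finset.mem_filter, Finset.mem_singleton, hmem]
    constructor
    · rintro ⟨(⟨ha, hne⟩ | rfl | rfl | rfl), h2⟩
      · exact absurd (huniqj a ha h2) hne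
      · exact absurd h2 (by simpa using hpj)
      · rfl
      · exact absurd h2 (by simpa using hij)
    · rintro rfl; exact ⟨by tauto, rfl⟩
  have hout_j : N'.A.filter (fun a => a.1 = j) = ∅ := by
    ext a
    simp only [Finset.mem_filter, Finset.notMem_empty, iff_false, not_and, hmem]
    rintro (⟨ha, -⟩ | rfl | rfl | rfl)
    · exact hnoj a ha
    · exact hqj'
    · exact hpj
    · exact hpj
  have hin_p : N'.A.filter (fun a => a.2 = p) = {(q, p)} := by
    ext a
    simp only [Finset.mem_filter, Finset.mem_singleton, hmem]
    constructor
    · rintro ⟨(⟨ha, -⟩ | rfl | rfl | rfl), h2⟩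
      · exact absurd h2 (hAi a ha).2.2.2
      · rfl
      · exact absurd h2 (by simpa using Ne.symm hpj)
      · exact absurd h2 (by simpa using Ne.symm hpi)
    · rintro rfl; exact ⟨by tauto, rfl⟩
  have hout_p_ne : N'.A.filter (fun a => a.1 = p) ≠ ∅ := by
    intro h
    have : (p, j) ∈ N'.A.filter (fun a => a.1 = p) :=
      Finset.mem_filter.mpr ⟨(hmem _).mpr (by tauto), rfl⟩
    rw [h] at this
    exact absurd this (Finset.notMem_empty _)
  -- indeg/outdeg preserved for v ∉ {i,j,p}
  have hin_eq : ∀ v, v ≠ i → v ≠ j → v ≠ p → N'.indeg v = N.indeg v := by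
    intro v hvi hvj hvp
    unfold Net.indeg
    congr 1
    ext a
    simp only [Finset.mem_filter, hmem]
    constructor
    · rintro ⟨(⟨ha, -⟩ | rfl | rfl | rfl), h2⟩
      · exact ⟨ha, h2⟩
      · exact absurd h2 (Ne.symm hvp)
      · exact absurd h2 (Ne.symm hvj)
      · exact absurd h2 (Ne.symm hvi)
    · rintro ⟨ha, h2⟩
      refine ⟨Or.inl ⟨ha, ?_⟩, h2⟩
      rintro rfl
      exact hvj (by simpa using h2.symm)
  have hout_eq : ∀ v, v ≠ i → v ≠ p → N'.outdeg v = N.outdeg v := by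
    intro v hvi hvp
    by_cases hvq : v = q
    · subst hvq
      unfold Net.outdeg
      have h1 : N'.A.filter (fun a => a.1 = v) =
          insert (v, p) ((N.A.filter (fun a => a.1 = v)).erase (v, j)) := by
        ext a
        simp only [Finset.mem_filter, Finset.mem_insert, Finset.mem_erase, hmem]
        constructor
        · rintro ⟨(⟨ha, hne⟩ | rfl | rfl | rfl), h2⟩
          · right; refine ⟨?_, ha, h2⟩
            rintro rfl; exact hne rfl
          · left; rfl
          · exact absurd h2 (by simpa using Ne.symm hvp)
          · exact absurd h2 (by simpa using Ne.symm hvp)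
        · rintro (rfl | ⟨hne, ha, h2⟩)
          · exact ⟨by tauto, rfl⟩
          · refine ⟨Or.inl ⟨ha, ?_⟩, h2⟩
            rintro rfl; exact hne rfl
      rw [h1]
      have hmemf : (v, j) ∈ N.A.filter (fun a => a.1 = v) :=
        Finset.mem_filter.mpr ⟨hqj, rfl⟩
      rw [Finset.card_insert_of_notMem (by
        simp only [Finset.mem_erase, Finset.mem_filter]
        rintro ⟨-, ha, -⟩
        exact (hAi _ ha).2.2.2 rfl), Finset.card_erase_of_mem hmemf]
      have : 0 < (N.A.filter (fun a => a.1 = v)).card := Finset.card_pos.mpr ⟨_, hmemf⟩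
      omega
    · unfold Net.outdeg
      congr 1
      ext a
      simp only [Finset.mem_filter, hmem]
      constructor
      · rintro ⟨(⟨ha, -⟩ | rfl | rfl | rfl), h2⟩
        · exact ⟨ha, h2⟩
        · exact absurd h2 (Ne.symm hvq)
        · exact absurd h2 (Ne.symm hvp)
        · exact absurd h2 (Ne.symm hvp)
      · rintro ⟨ha, h2⟩
        refine ⟨Or.inl ⟨ha, ?_⟩, h2⟩
        rintro rfl
        exact hvq (by simpa using h2.symm)
  have hVmem : ∀ v, v ≠ i → v ≠ p → (v ∈ N'.V ↔ v ∈ N.V) := by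
    intro v hvi hvp
    simp [hV', hvi, hvp]
  have hiV' : i ∈ N'.V := by simp [hV']
  have hin1_i : N'.indeg i = 1 := by unfold Net.indeg; rw [hin_i]; rfl
  have hout0_i : N'.outdeg i = 0 := by unfold Net.outdeg; rw [hout_i]; rfl
  have hin1_j : N'.indeg j = 1 := by unfold Net.indeg; rw [hin_j]; rfl
  have hout0_j : N'.outdeg j = 0 := by unfold Net.outdeg; rw [hout_j]; rfl
  have hin1_p : N'.indeg p = 1 := by unfold Net.indeg; rw [hin_p]; rfl
  have hleaf_i : N'.isLeaf i := ⟨hiV', hin1_i, hout0_i⟩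
  have hleaf_j : N'.isLeaf j := ⟨by rw [hVmem j (Ne.symm hij) (Ne.symm hpj)]; exact hjV,
    hin1_j, hout0_j⟩
  -- reticulations are the same
  have hret : ∀ v, N'.isRetic v ↔ N.isRetic v := by
    intro v
    by_cases hvi : v = i
    · subst hvi
      constructor
      · rintro ⟨-, h2, -⟩; rw [hin1_i] at h2; exact absurd h2 (by norm_num : (1:ℕ) ≠ 2)
      · rintro ⟨h1, -⟩; exact absurd h1 hiV
    by_cases hvp : v = p
    · subst hvp
      constructor
      · rintro ⟨-, h2, -⟩; rw [hin1_p] at h2; exact absurd h2 (by norm_num : (1:ℕ) ≠ 2)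
      · rintro ⟨h1, -⟩; exact absurd h1 hpV
    by_cases hvj : v = j
    · subst hvj
      constructor
      · rintro ⟨-, h2, -⟩; rw [hin1_j] at h2; exact absurd h2 (by norm_num : (1:ℕ) ≠ 2)
      · rintro ⟨-, h2, -⟩; rw [hj.2.1] at h2; exact absurd h2 (by norm_num : (1:ℕ) ≠ 2)
    · unfold Net.isRetic
      rw [hVmem v hvi hvp, hin_eq v hvi hvj hvp, hout_eq v hvi hvp]
  -- state of i in N'
  have hpar_i : ∀ x, (x, i) ∈ N'.A → x = p := by
    intro x hx
    have : (x, i) ∈ N'.A.filter (fun a => a.2 = i) := Finset.mem_filter.mpr ⟨hx, rfl⟩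
    rw [hin_i, Finset.mem_singleton] at this
    exact congrArg Prod.fst this
  have hpar_j : ∀ x, (x, j) ∈ N'.A → x = p := by
    intro x hx
    have : (x, j) ∈ N'.A.filter (fun a => a.2 = j) := Finset.mem_filter.mpr ⟨hx, rfl⟩
    rw [hin_j, Finset.mem_singleton] at this
    exact congrArg Prod.fst this
  have hchild_p : ∀ s, (p, s) ∈ N'.A → s = j ∨ s = i := by
    intro s hs
    rcases (hmem _).mp hs with ⟨ha, -⟩ | he | he | he
    · exact absurd rfl (hAi _ ha).2.2.1
    · exact absurd (congrArg Prod.fst he) hqp.symm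
    · exact Or.inl (congrArg Prod.snd he)
    · exact Or.inr (congrArg Prod.snd he)
  have hnretp : ¬ N'.isRetic p := by
    rintro ⟨-, h2, -⟩; rw [hin1_p] at h2; exact absurd h2 (by norm_num : (1:ℕ) ≠ 2)
  have hnretj : ¬ N'.isRetic j := by
    rintro ⟨-, h2, -⟩; rw [hin1_j] at h2; exact absurd h2 (by norm_num : (1:ℕ) ≠ 2)
  have hnreti : ¬ N'.isRetic i := by
    rintro ⟨-, h2, -⟩; rw [hin1_i] at h2; exact absurd h2 (by norm_num : (1:ℕ) ≠ 2)
  refine ⟨?_, ?_, ?_⟩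
  · rw [state]
    rw [if_neg (not_not.mpr hleaf_i)]
    rw [if_neg, if_neg]
    · rintro ⟨x, s, hx, hs, hsne, hrets⟩
      have := hpar_i x hx; subst this
      rcases hchild_p s hs with rfl | rfl
      · exact hnretj hrets
      · exact hsne rfl
    · rintro ⟨x, hx, hretx⟩
      have := hpar_i x hx; subst this
      exact hnretp hretx
  · rw [state]
    rw [if_neg (not_not.mpr hleaf_j)]
    rw [if_neg, if_neg]
    · rintro ⟨x, s, hx, hs, hsne, hrets⟩
      have := hpar_j x hx; subst this
      rcases hchild_p s hs with rfl | rfl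
      · exact hsne rfl
      · exact hnreti hrets
    · rintro ⟨x, hx, hretx⟩
      have := hpar_j x hx; subst this
      exact hnretp hretx
  · intro l hli hlj
    by_cases hlp : l = p
    · subst hlp
      have h1 : ¬ N.isLeaf l := fun h => hpV h.1
      have h2 : ¬ N'.isLeaf l := by
        rintro ⟨-, -, h0⟩
        exact hout_p_ne (Finset.card_eq_zero.mp h0)
      rw [state, state, if_pos h2, if_pos h1]
    · have hleaf_eq : N'.isLeaf l ↔ N.isLeaf l := by
        unfold Net.isLeaf
        rw [hVmem l hli hlp, hin_eq l hli hlj hlp, hout_eq l hli hlp]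
      have hparl : ∀ x, ((x, l) ∈ N'.A ↔ (x, l) ∈ N.A) := by
        intro x
        rw [hmem]
        constructor
        · rintro (⟨ha, -⟩ | he | he | he)
          · exact ha
          · exact absurd (congrArg Prod.snd he) hlp
          · exact absurd (congrArg Prod.snd he) hlj
          · exact absurd (congrArg Prod.snd he) hli
        · intro ha
          refine Or.inl ⟨ha, ?_⟩
          intro he
          exact hlj (congrArg Prod.snd he)
      have e2 : (∃ x, (x, l) ∈ N'.A ∧ N'.isRetic x) ↔ (∃ x, (x, l) ∈ N.A ∧ N.isRetic x) := by
        constructor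
        · rintro ⟨x, hx, hr⟩; exact ⟨x, (hparl x).mp hx, (hret x).mp hr⟩
        · rintro ⟨x, hx, hr⟩; exact ⟨x, (hparl x).mpr hx, (hret x).mpr hr⟩
      have e3 : (∃ x s, (x, l) ∈ N'.A ∧ (x, s) ∈ N'.A ∧ s ≠ l ∧ N'.isRetic s) ↔
          (∃ x s, (x, l) ∈ N.A ∧ (x, s) ∈ N.A ∧ s ≠ l ∧ N.isRetic s) := by
        constructor
        · rintro ⟨x, s, hx, hs, hsne, hrets⟩
          refine ⟨x, s, (hparl x).mp hx, ?_, hsne, (hret s).mp hrets⟩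
          rcases (hmem _).mp hs with ⟨ha, -⟩ | he | he | he
          · exact ha
          · have hs' : s = p := congrArg Prod.snd he
            subst hs'
            exact absurd hrets hnretp
          · have hx2 : x = p := congrArg Prod.fst he
            have h' := (hAi _ ((hparl x).mp hx)).2.2.1
            simp only at h'
            exact absurd hx2 h'
          · have hx2 : x = p := congrArg Prod.fst he
            have h' := (hAi _ ((hparl x).mp hx)).2.2.1
            simp only at h'
            exact absurd hx2 h'
        · rintro ⟨x, s, hx, hs, hsne, hrets⟩
          refine ⟨x, s, (hparl x).mpr hx, ?_, hsne, (hret s).mpr hrets⟩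
          rw [hmem]
          refine Or.inl ⟨hs, ?_⟩
          intro he
          have hs' : s = j := congrArg Prod.snd he
          subst hs'
          rw [Net.isRetic, hj.2.1] at hrets
          exact absurd hrets.2.1 (by norm_num : (1:ℕ) ≠ 2)
      rw [state, state]
      by_cases h1 : N.isLeaf l
      · rw [if_neg (not_not.mpr (hleaf_eq.mpr h1)), if_neg (not_not.mpr h1)]
        by_cases hp2 : ∃ x, (x, l) ∈ N.A ∧ N.isRetic x
        · rw [if_pos hp2, if_pos (e2.mpr hp2)]
        · rw [if_neg hp2, if_neg (fun h => hp2 (e2.mp h))]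
          by_cases hp3 : ∃ x s, (x, l) ∈ N.A ∧ (x, s) ∈ N.A ∧ s ≠ l ∧ N.isRetic s
          · rw [if_pos hp3, if_pos (e3.mpr hp3)]
          · rw [if_neg hp3, if_neg (fun h => hp3 (e3.mp h))]
      · rw [if_pos (fun h => h1 (hleaf_eq.mp h)), if_pos h1]
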